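/- arXiv:1102.2723 — 2 statements merged into one kernel-verified Lean document; each statement's English description precedes it below -/
import Mathlib

section
/- Let n ≥ 1 and let U_n(x) be the determinant of the (n+1)×(n+1) matrix whose rows with index i = 0,…,n−1 have entries s_{i+j} for j = 0,…,n and whose last row has entries 1, x, x², …, x^n. Then for every real x, U_n(x) = √(D_{n−1}·D_n) · P_n(x;p,q), where D_m = det((s_{i+j})_{0 ≤ i,j ≤ m}) and P_n(x;p,q) = (−1)^n·q^{n/2+1/4}·√((p;q)_n/(q;q)_n)·∑_{k=0}^n (−1)^k·[n choose k]_q·(q^{k²+k/2}/(p;q)_k)·x^k. -/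
/-- Finite q-shifted factorial `(z;q)_n`. -/
noncomputable def qp (z q : ℝ) (n : ℕ) : ℝ := ∏ k ∈ Finset.range n, (1 - z * q ^ k)

/-- Gaussian q-binomial coefficient. -/
noncomputable def qbinom (q : ℝ) (n k : ℕ) : ℝ := qp q q n / (qp q q k * qp q q (n - k))

/-- Generalized Stieltjes–Wigert moments `s_n = (p;q)_n q^{-(n+1)²/2}`. -/
noncomputable def sw (p q : ℝ) (n : ℕ) : ℝ := qp p q n * q ^ (-(((n : ℝ) + 1) ^ 2) / 2)

/-- Hankel determinant `D_m = det (s_{i+j})_{0 ≤ i,j ≤ m}`. -/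
noncomputable def hD (p q : ℝ) (m : ℕ) : ℝ :=
  (Matrix.of fun i j : Fin (m + 1) => sw p q ((i : ℕ) + (j : ℕ))).det

/-- Orthonormal generalized Stieltjes–Wigert polynomial `P_n(x;p,q)`. -/
noncomputable def P (p q : ℝ) (n : ℕ) (x : ℝ) : ℝ :=
  (-1) ^ n * q ^ ((n : ℝ) / 2 + 1 / 4) * Real.sqrt (qp p q n / qp q q n) *
    ∑ k ∈ Finset.range (n + 1),
      (-1) ^ k * qbinom q n k * (q ^ ((k : ℝ) ^ 2 + (k : ℝ) / 2) / qp p q k) * x ^ k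

/-
Write `c_k` for the coefficient of `x^k` in the sum defining `P_n` (`swCoeff`). After the
substitution `(p;q)_{i+k} = (p;q)_k (pq^k;q)_i`, expanding `(pq^k;q)_i` by the q-binomial theorem
and summing over `k` first turns `∑_k c_k s_{i+k}` into a multiple of
`∑_m (-1)^m [i m]_q q^{m(m-1)/2} p^m (q^{m-i};q)_n`. For `i < n` every `(q^{m-i};q)_n` contains the
factor `1 - q^0 = 0`, so `c` is orthogonal to the first `n` rows of the bordered matrix; for `i = n`
only `m = 0` survives.

Replacing the last column by `∑_k c_k · (column k)` multiplies the determinant by `c_n` and leaves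
`∑_k c_k (last row)_k` as the only nonzero entry of that column, so
`c_n U_n(x) = (∑_k c_k x^k) D_{n-1}`. Choosing `s_{n+k}` as the last row gives
`D_n = (p;q)_n (q;q)_n q^{-2n²-2n-1/2} D_{n-1}`, whence `D_m > 0` and
`√(D_{n-1} D_n) = D_{n-1} q^{-n²-n-1/4} √((p;q)_n (q;q)_n)`; the rest is arithmetic of powers
of `q`.
-/

open Finset Matrix

lemma qp_zero (z q : ℝ) : qp z q 0 = 1 := prod_range_zero _

lemma qp_succ (z q : ℝ) (n : ℕ) : qp z q (n + 1) = qp z q n * (1 - z * q ^ n) :=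
  prod_range_succ _ n

lemma qp_add (z q : ℝ) (a b : ℕ) : qp z q (a + b) = qp z q a * qp (z * q ^ a) q b := by
  simp only [qp, prod_range_add, pow_add, mul_assoc]

lemma qp_pos {z q : ℝ} (hz : z < 1) (hq0 : 0 ≤ q) (hq1 : q ≤ 1) (n : ℕ) : 0 < qp z q n := by
  refine prod_pos fun k _ => ?_
  have h0 : 0 ≤ q ^ k := pow_nonneg hq0 k
  have h1 : q ^ k ≤ 1 := pow_le_one₀ hq0 hq1
  rcases le_or_gt z 0 with hz0 | hz0 <;> nlinarith

lemma qp_inv_pow_eq_zero {q : ℝ} (hq : q ≠ 0) {d n : ℕ} (hd : d < n) : qp (q ^ d)⁻¹ q n = 0 :=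
  prod_eq_zero (mem_range.mpr hd) (by field_simp; ring)

lemma qp_inv_pow_self {q : ℝ} (hq : q ≠ 0) (n : ℕ) :
    qp (q ^ n)⁻¹ q n = (-1) ^ n * (q ^ (n + 1).choose 2)⁻¹ * qp q q n := by
  have reflect : qp (q ^ n)⁻¹ q n = ∏ k ∈ range n, (1 - (q ^ (k + 1))⁻¹) := by
    rw [qp, ← prod_range_reflect]
    refine prod_congr rfl fun j hj => ?_
    have hj : j < n := mem_range.mp hj
    have hn : q ^ n = q ^ (j + 1) * q ^ (n - 1 - j) := by rw [← pow_add]; congr 1; omega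
    rw [hn, mul_inv, mul_assoc, inv_mul_cancel₀ (pow_ne_zero _ hq), mul_one]
  rw [reflect]
  clear reflect
  induction n with
  | zero => simp [qp_zero]
  | succ n ih =>
    rw [prod_range_succ, ih, qp_succ, Nat.choose_succ_succ' (n + 1), Nat.choose_one_right]
    field_simp
    ring

lemma inv_pow_mul_pow_of_le {q : ℝ} (hq : q ≠ 0) {i m : ℕ} (hm : m ≤ i) :
    (q ^ i)⁻¹ * q ^ m = (q ^ (i - m))⁻¹ := by
  rw [← Nat.sub_add_cancel hm, pow_add, Nat.add_sub_cancel, mul_inv, mul_assoc,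
    inv_mul_cancel₀ (pow_ne_zero _ hq), mul_one]

section QBinomial

variable {q : ℝ} (hq : ∀ n, qp q q n ≠ 0)
include hq

lemma qbinom_zero_right (n : ℕ) : qbinom q n 0 = 1 := by
  simp [qbinom, qp_zero, hq]

lemma qbinom_self (n : ℕ) : qbinom q n n = 1 := by
  simp [qbinom, qp_zero, hq]

lemma qbinom_succ_succ {n k : ℕ} (hk : k < n) :
    qbinom q (n + 1) (k + 1) = qbinom q n (k + 1) + q ^ (n - k) * qbinom q n k := by
  obtain ⟨d, rfl⟩ : ∃ d, n = k + d + 1 := ⟨n - k - 1, by omega⟩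
  have hk := qp_succ q q k
  have hd := qp_succ q q d
  have hkd := qp_succ q q (k + d + 1)
  have hk' : 1 - q * q ^ k ≠ 0 := right_ne_zero_of_mul (hk ▸ hq (k + 1))
  have hd' : 1 - q * q ^ d ≠ 0 := right_ne_zero_of_mul (hd ▸ hq (d + 1))
  simp only [qbinom, show k + d + 1 + 1 - (k + 1) = d + 1 by omega,
    show k + d + 1 - (k + 1) = d by omega, show k + d + 1 - k = d + 1 by omega, hk, hd, hkd]
  have := hq k; have := hq d; have := hq (k + d + 1)
  field_simp
  ring

lemma sum_qbinom_mul_pow_eq_qp (n : ℕ) (z : ℝ) :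
    ∑ k ∈ range (n + 1), (-1) ^ k * qbinom q n k * q ^ k.choose 2 * z ^ k = qp z q n := by
  induction n with
  | zero => simp [qp_zero, qbinom_self hq]
  | succ n ih =>
    set t : ℕ → ℕ → ℝ := fun m k => (-1) ^ k * qbinom q m k * q ^ k.choose 2 * z ^ k
    have bottom : ∀ m, t m 0 = 1 := fun m => by simp [t, qbinom_zero_right hq]
    have top : t (n + 1) (n + 1) = -(z * q ^ n * t n n) := by
      simp only [t, qbinom_self hq, Nat.choose_succ_succ' n, Nat.choose_one_right, pow_add]
      ring
    have pascal : ∀ k ∈ range n, t (n + 1) (k + 1) = t n (k + 1) - z * q ^ n * t n k := by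
      intro k hk
      have hk : k < n := mem_range.mp hk
      have hqn : q ^ (n - k) * q ^ k = q ^ n := by rw [← pow_add, Nat.sub_add_cancel hk.le]
      simp only [t, qbinom_succ_succ hq hk, Nat.choose_succ_succ' k, Nat.choose_one_right,
        pow_add]
      linear_combination (-1) ^ (k + 1) * qbinom q n k * q ^ k.choose 2 * z ^ (k + 1) * hqn
    have split_bottom := sum_range_succ' (t n) n
    have split_top := sum_range_succ (t n) n
    rw [qp_succ, ← ih]
    change ∑ k ∈ range (n + 2), t (n + 1) k = (∑ k ∈ range (n + 1), t n k) * (1 - z * q ^ n)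
    rw [sum_range_succ', sum_range_succ, sum_congr rfl pascal, top,
      sum_sub_distrib, ← mul_sum, bottom]
    rw [bottom] at split_bottom
    linear_combination z * q ^ n * split_top - split_bottom

lemma sum_qbinom_mul_qp_comm (n i : ℕ) (w z : ℝ) :
    ∑ k ∈ range (n + 1), (-1) ^ k * qbinom q n k * q ^ k.choose 2 * w ^ k * qp (z * q ^ k) q i =
      ∑ m ∈ range (i + 1),
        (-1) ^ m * qbinom q i m * q ^ m.choose 2 * z ^ m * qp (w * q ^ m) q n := by
  simp_rw [← sum_qbinom_mul_pow_eq_qp hq, mul_sum]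
  rw [sum_comm]
  refine sum_congr rfl fun m _ => sum_congr rfl fun k _ => ?_
  rw [mul_pow, mul_pow, ← pow_mul, ← pow_mul, mul_comm k m]
  ring

end QBinomial

noncomputable def swCoeff (p q : ℝ) (n k : ℕ) : ℝ :=
  (-1) ^ k * qbinom q n k * (q ^ ((k : ℝ) ^ 2 + (k : ℝ) / 2) / qp p q k)

lemma P_eq_sum_swCoeff (p q : ℝ) (n : ℕ) (x : ℝ) :
    P p q n x = (-1) ^ n * q ^ ((n : ℝ) / 2 + 1 / 4) * Real.sqrt (qp p q n / qp q q n) *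
      ∑ k ∈ range (n + 1), swCoeff p q n k * x ^ k := rfl

section Orthogonality

variable {p q : ℝ} (hq : 0 < q) (hqq : ∀ n, qp q q n ≠ 0) (hpq : ∀ n, qp p q n ≠ 0)

include hq hpq in
lemma swCoeff_mul_sw (n i k : ℕ) :
    swCoeff p q n k * sw p q (i + k) = q ^ (-((i + 1 : ℝ) ^ 2) / 2) *
      ((-1) ^ k * qbinom q n k * q ^ k.choose 2 * ((q ^ i)⁻¹) ^ k * qp (p * q ^ k) q i) := by
  have hexp : q ^ ((k : ℝ) ^ 2 + (k : ℝ) / 2) * q ^ (-(((i + k : ℕ) : ℝ) + 1) ^ 2 / 2) =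
      q ^ (-((i + 1 : ℝ) ^ 2) / 2) * (q ^ k.choose 2 * ((q ^ i)⁻¹) ^ k) := by
    rw [inv_pow, ← pow_mul, ← Real.rpow_natCast q (i * k), ← Real.rpow_neg hq.le,
      ← Real.rpow_natCast q (k.choose 2), Nat.cast_choose_two, ← Real.rpow_add hq,
      ← Real.rpow_add hq, ← Real.rpow_add hq]
    congr 1
    push_cast
    ring
  rw [swCoeff, sw, add_comm i k, qp_add, add_comm k i]
  calc (-1) ^ k * qbinom q n k * (q ^ ((k : ℝ) ^ 2 + (k : ℝ) / 2) / qp p q k) *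
        (qp p q k * qp (p * q ^ k) q i * q ^ (-(((i + k : ℕ) : ℝ) + 1) ^ 2 / 2))
      = (-1) ^ k * qbinom q n k * qp (p * q ^ k) q i *
          (q ^ ((k : ℝ) ^ 2 + (k : ℝ) / 2) * q ^ (-(((i + k : ℕ) : ℝ) + 1) ^ 2 / 2)) *
          (qp p q k / qp p q k) := by ring
    _ = _ := by rw [hexp, div_self (hpq k)]; ring

include hq hqq hpq

lemma sum_swCoeff_mul_sw_of_lt {n i : ℕ} (hi : i < n) :
    ∑ k ∈ range (n + 1), swCoeff p q n k * sw p q (i + k) = 0 := by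
  simp_rw [swCoeff_mul_sw hq hpq]
  rw [← mul_sum, sum_qbinom_mul_qp_comm hqq]
  refine mul_eq_zero_of_right _ (sum_eq_zero fun m hm => ?_)
  have hm : m ≤ i := Nat.lt_succ_iff.mp (mem_range.mp hm)
  rw [inv_pow_mul_pow_of_le hq.ne' hm, qp_inv_pow_eq_zero hq.ne' (by omega), mul_zero]

lemma sum_swCoeff_mul_sw_self (n : ℕ) :
    ∑ k ∈ range (n + 1), swCoeff p q n k * sw p q (n + k) =
      q ^ (-((n + 1 : ℝ) ^ 2) / 2) * qp (q ^ n)⁻¹ q n := by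
  simp_rw [swCoeff_mul_sw hq hpq]
  rw [← mul_sum, sum_qbinom_mul_qp_comm hqq, sum_eq_single 0]
  · simp [qbinom_zero_right hqq]
  · intro m hm hm0
    have hm : m ≤ n := Nat.lt_succ_iff.mp (mem_range.mp hm)
    rw [inv_pow_mul_pow_of_le hq.ne' hm, qp_inv_pow_eq_zero hq.ne' (by omega), mul_zero]
  · simp

end Orthogonality

theorem Matrix.mul_det_eq_of_mulVec_castSucc_eq_zero {R : Type*} [CommRing R] {m : ℕ}
    (M : Matrix (Fin (m + 1)) (Fin (m + 1)) R) (a : Fin (m + 1) → R)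
    (h : ∀ i : Fin m, (M *ᵥ a) i.castSucc = 0) :
    a (Fin.last m) * M.det =
      (M *ᵥ a) (Fin.last m) * (M.submatrix Fin.castSucc Fin.castSucc).det := by
  have hcol : (fun k => ∑ i, a i • M k i) = M *ᵥ a := by
    ext k; simp [Matrix.mulVec, dotProduct, mul_comm]
  rw [← smul_eq_mul, ← Matrix.det_updateCol_sum, hcol, Matrix.det_succ_column _ (Fin.last m),
    Fin.sum_univ_castSucc]
  have hsub : (M.updateCol (Fin.last m) (M *ᵥ a)).submatrix Fin.castSucc Fin.castSucc =
      M.submatrix Fin.castSucc Fin.castSucc := by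
    ext i j
    simp
  simp [Fin.succAbove_last, h, hsub, Even.neg_one_pow ⟨m, rfl⟩]

lemma mul_det_hankel_bordered {R : Type*} [CommRing R] (s r a : ℕ → R) (m : ℕ)
    (ha : ∀ i ≤ m, ∑ k ∈ range (m + 2), a k * s (i + k) = 0) :
    a (m + 1) *
        (Matrix.of fun i j : Fin (m + 2) => if (i : ℕ) < m + 1 then s (i + j) else r j).det =
      (∑ k ∈ range (m + 2), a k * r k) * (Matrix.of fun i j : Fin (m + 1) => s (i + j)).det := by
  set M : Matrix (Fin (m + 2)) (Fin (m + 2)) R :=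
    Matrix.of fun i j => if (i : ℕ) < m + 1 then s (i + j) else r j
  have hrow : ∀ (i : Fin (m + 2)) (t : ℕ → R), (∀ j, M i j = t j) →
      (M *ᵥ fun j => a j) i = ∑ k ∈ range (m + 2), a k * t k := by
    intro i t hi
    simp only [mulVec, dotProduct, hi, mul_comm (t _)]
    exact Fin.sum_univ_eq_sum_range (fun k => a k * t k) (m + 2)
  have hsub :
      M.submatrix Fin.castSucc Fin.castSucc = Matrix.of fun i j : Fin (m + 1) => s (i + j) := by
    ext i j; simp [M, i.is_le]
  have key := Matrix.mul_det_eq_of_mulVec_castSucc_eq_zero M (fun j => a j) fun i =>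
    (hrow _ (fun k => s (i + k)) fun j => by simp [M, i.is_le]).trans (ha i i.is_le)
  rwa [hrow _ r (fun j => by simp [M]), hsub] at key

noncomputable def hankelRatio (p q : ℝ) (n : ℕ) : ℝ :=
  qp p q n * qp q q n * q ^ (-(2 * (n : ℝ) ^ 2 + 2 * n + 1 / 2))

section HankelDeterminants

variable {p q : ℝ} (hp : p < 1) (hq0 : 0 < q) (hq1 : q < 1)
include hq0 hq1

lemma swCoeff_self (n : ℕ) :
    swCoeff p q n n = (-1) ^ n * (q ^ ((n : ℝ) ^ 2 + (n : ℝ) / 2) / qp p q n) := by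
  rw [swCoeff, qbinom_self fun k => (qp_pos hq1 hq0.le hq1.le k).ne', mul_one]

include hp

lemma swCoeff_self_ne_zero (n : ℕ) : swCoeff p q n n ≠ 0 := by
  rw [swCoeff_self hq0 hq1]
  exact mul_ne_zero (pow_ne_zero _ (by norm_num))
    (div_pos (Real.rpow_pos_of_pos hq0 _) (qp_pos hp hq0.le hq1.le n)).ne'

lemma sum_swCoeff_mul_sw_self_eq (n : ℕ) :
    ∑ k ∈ range (n + 1), swCoeff p q n k * sw p q (n + k) = swCoeff p q n n *
      hankelRatio p q n := by
  have hG := qp_pos hp hq0.le hq1.le n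
  have hchoose : (q ^ (n + 1).choose 2)⁻¹ = q ^ (-((n : ℝ) ^ 2 + n) / 2) := by
    rw [← Real.rpow_natCast, Nat.cast_choose_two, ← Real.rpow_neg hq0.le]
    congr 1
    push_cast
    ring
  have hexp : q ^ (-((n + 1 : ℝ) ^ 2) / 2) * q ^ (-((n : ℝ) ^ 2 + n) / 2) =
      q ^ ((n : ℝ) ^ 2 + (n : ℝ) / 2) * q ^ (-(2 * (n : ℝ) ^ 2 + 2 * n + 1 / 2)) := by
    rw [← Real.rpow_add hq0, ← Real.rpow_add hq0]
    congr 1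
    ring
  rw [sum_swCoeff_mul_sw_self hq0 (fun k => (qp_pos hq1 hq0.le hq1.le k).ne')
    (fun k => (qp_pos hp hq0.le hq1.le k).ne'), qp_inv_pow_self hq0.ne', hchoose,
    swCoeff_self hq0 hq1]
  calc q ^ (-((n + 1 : ℝ) ^ 2) / 2) * ((-1) ^ n * q ^ (-((n : ℝ) ^ 2 + n) / 2) * qp q q n)
      = (-1) ^ n * qp q q n * (q ^ (-((n + 1 : ℝ) ^ 2) / 2) * q ^ (-((n : ℝ) ^ 2 + n) / 2)) := by
        ring
    _ = (-1) ^ n * qp q q n * (q ^ ((n : ℝ) ^ 2 + (n : ℝ) / 2) *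
          q ^ (-(2 * (n : ℝ) ^ 2 + 2 * n + 1 / 2))) * (qp p q n / qp p q n) := by
        rw [hexp, div_self hG.ne', mul_one]
    _ = _ := by rw [hankelRatio]; ring

lemma hankelRatio_pos (n : ℕ) : 0 < hankelRatio p q n :=
  mul_pos (mul_pos (qp_pos hp hq0.le hq1.le n) (qp_pos hq1 hq0.le hq1.le n))
    (Real.rpow_pos_of_pos hq0 _)

lemma hD_succ (m : ℕ) : hD p q (m + 1) = hankelRatio p q (m + 1) * hD p q m := by
  have key := mul_det_hankel_bordered (sw p q) (fun j => sw p q (m + 1 + j)) (swCoeff p q (m + 1))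
    m fun i hi => sum_swCoeff_mul_sw_of_lt hq0 (fun k => (qp_pos hq1 hq0.le hq1.le k).ne')
      (fun k => (qp_pos hp hq0.le hq1.le k).ne') (Nat.lt_succ_of_le hi)
  have hbordered : (Matrix.of fun i j : Fin (m + 2) =>
      if (i : ℕ) < m + 1 then sw p q (i + j) else sw p q (m + 1 + j)) =
      Matrix.of fun i j : Fin (m + 2) => sw p q (i + j) := by
    ext i j
    simp only [Matrix.of_apply]
    split_ifs with hi
    · rfl
    · rw [show (i : ℕ) = m + 1 by omega]
  rw [hbordered, sum_swCoeff_mul_sw_self_eq hp hq0 hq1, mul_assoc] at key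
  exact mul_left_cancel₀ (swCoeff_self_ne_zero hp hq0 hq1 (m + 1)) key

lemma hD_pos (m : ℕ) : 0 < hD p q m := by
  induction m with
  | zero =>
    rw [hD, Matrix.det_fin_one]
    exact mul_pos (qp_pos hp hq0.le hq1.le _) (Real.rpow_pos_of_pos hq0 _)
  | succ m ih =>
    rw [hD_succ hp hq0 hq1]
    exact mul_pos (hankelRatio_pos hp hq0 hq1 _) ih

lemma swCoeff_self_mul_sqrt_hankelRatio (n : ℕ) :
    swCoeff p q n n * Real.sqrt (hankelRatio p q n) *
      ((-1) ^ n * q ^ ((n : ℝ) / 2 + 1 / 4) * Real.sqrt (qp p q n / qp q q n)) = 1 := by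
  have hG := qp_pos hp hq0.le hq1.le n
  have hF := qp_pos hq1 hq0.le hq1.le n
  set e : ℝ := -((n : ℝ) ^ 2 + n + 1 / 4)
  have hsqrt : Real.sqrt (hankelRatio p q n) * Real.sqrt (qp p q n / qp q q n) =
      qp p q n * q ^ e := by
    have hq2 : (q ^ e) ^ 2 = q ^ (-(2 * (n : ℝ) ^ 2 + 2 * n + 1 / 2)) := by
      rw [sq, ← Real.rpow_add hq0]
      congr 1
      ring
    rw [← Real.sqrt_mul (hankelRatio_pos hp hq0 hq1 n).le,
      ← Real.sqrt_sq (mul_pos hG (Real.rpow_pos_of_pos hq0 e)).le, mul_pow, hq2, hankelRatio]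
    congr 1
    field_simp
  have hexp : q ^ ((n : ℝ) ^ 2 + (n : ℝ) / 2) * q ^ ((n : ℝ) / 2 + 1 / 4) * q ^ e = 1 := by
    rw [← Real.rpow_add hq0, ← Real.rpow_add hq0]
    convert Real.rpow_zero q using 2
    ring
  have hsign : ((-1 : ℝ) ^ n) ^ 2 = 1 := by
    rw [← pow_mul]
    exact Even.neg_one_pow ⟨n, by ring⟩
  rw [swCoeff_self hq0 hq1]
  calc (-1) ^ n * (q ^ ((n : ℝ) ^ 2 + (n : ℝ) / 2) / qp p q n) * Real.sqrt (hankelRatio p q n) *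
        ((-1) ^ n * q ^ ((n : ℝ) / 2 + 1 / 4) * Real.sqrt (qp p q n / qp q q n))
      = ((-1) ^ n) ^ 2 * (q ^ ((n : ℝ) ^ 2 + (n : ℝ) / 2) * q ^ ((n : ℝ) / 2 + 1 / 4)) *
          (Real.sqrt (hankelRatio p q n) * Real.sqrt (qp p q n / qp q q n)) / qp p q n := by
        ring
    _ = ((-1) ^ n) ^ 2 * (q ^ ((n : ℝ) ^ 2 + (n : ℝ) / 2) * q ^ ((n : ℝ) / 2 + 1 / 4) * q ^ e) *
          (qp p q n / qp p q n) := by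
        rw [hsqrt]
        ring
    _ = 1 := by rw [hsign, hexp, div_self hG.ne', one_mul, one_mul]

end HankelDeterminants

theorem stmt_11_general (p q : ℝ) (hp1 : p < 1) (hq0 : 0 < q) (hq1 : q < 1)
    (n : ℕ) (hn : 1 ≤ n) (x : ℝ) :
    (Matrix.of fun i j : Fin (n + 1) =>
        if (i : ℕ) < n then sw p q ((i : ℕ) + (j : ℕ)) else x ^ (j : ℕ)).det
      = Real.sqrt (hD p q (n - 1) * hD p q n) * P p q n x := by
  obtain ⟨m, rfl⟩ : ∃ m, n = m + 1 := ⟨n - 1, by omega⟩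
  have hU := mul_det_hankel_bordered (sw p q) (fun j => x ^ j) (swCoeff p q (m + 1)) m
    fun i hi => sum_swCoeff_mul_sw_of_lt hq0 (fun k => (qp_pos hq1 hq0.le hq1.le k).ne')
      (fun k => (qp_pos hp1 hq0.le hq1.le k).ne') (Nat.lt_succ_of_le hi)
  change _ = _ * hD p q m at hU
  have hD_m := hD_pos hp1 hq0 hq1 m
  have hsqrt : Real.sqrt (hD p q m * hD p q (m + 1)) =
      hD p q m * Real.sqrt (hankelRatio p q (m + 1)) := by
    rw [hD_succ hp1 hq0 hq1, mul_left_comm, Real.sqrt_mul (hankelRatio_pos hp1 hq0 hq1 _).le,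
      Real.sqrt_mul_self hD_m.le, mul_comm]
  rw [Nat.add_sub_cancel, hsqrt, P_eq_sum_swCoeff]
  refine mul_left_cancel₀ (swCoeff_self_ne_zero hp1 hq0 hq1 (m + 1)) ?_
  rw [hU]
  linear_combination -(∑ k ∈ range (m + 2), swCoeff p q (m + 1) k * x ^ k) * hD p q m *
    swCoeff_self_mul_sqrt_hankelRatio hp1 hq0 hq1 (m + 1)

theorem stmt_11 (p q : ℝ) (hp0 : 0 ≤ p) (hp1 : p < 1) (hq0 : 0 < q) (hq1 : q < 1)
    (n : ℕ) (hn : 1 ≤ n) (x : ℝ) :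
    (Matrix.of fun i j : Fin (n + 1) =>
        if (i : ℕ) < n then sw p q ((i : ℕ) + (j : ℕ)) else x ^ (j : ℕ)).det
      = Real.sqrt (hD p q (n - 1) * hD p q n) * P p q n x :=
  stmt_11_general p q hp1 hq0 hq1 n hn x
end

section
/- With M_k = q·Δ_k/((1+q−(1+p)·q^{k+1})·Δ_{k+1}) for k ≥ 0, one has M_k/(1−M_k) = q·Δ_k/(Δ_{k+2}·(1−q^{k+1})·(1−pq^{k+1})) for every k ≥ 0, and the series ∑_{n=1}^∞ ∏_{k=1}^n (M_k/(1−M_k)) diverges to +∞. -/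
/-!
The shift relation `(z;q)_∞ = (1 - z) (zq;q)_∞` gives the three-term recurrence
`(1 - q^{k+1}) (1 - pq^{k+1}) Δ_{k+2} = (1 + q - (1 + p) q^{k+1}) Δ_{k+1} - q Δ_k`, whose right side
is `1 - M_k` times the denominator of `M_k`; this is the identity. For the divergence, dropping the
factors `(1 - q^{k+1}) (1 - pq^{k+1}) ≤ 1` bounds the `n`-th product below by the telescoping
product `∏ q Δ_k / Δ_{k+2} = q^n Δ_1 Δ_2 / (Δ_{n+1} Δ_{n+2})`, and `0 < Δ_n ≤ q^n / (1 - q)^2`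
keeps it away from zero. Strict antitonicity of `(z;q)_∞` in `z` and the bound on `1 - (z;q)_∞`
come from `(z;q)_∞ = exp ∑ log (1 - z q^k)`.
-/

/-- Infinite q-shifted factorial `(z;q)_∞`. -/
noncomputable def qpInf (z q : ℝ) : ℝ := ∏' k : ℕ, (1 - z * q ^ k)

/-- `Δ_n = (pq^n;q)_∞ − (q^n;q)_∞`. -/
noncomputable def Δ (p q : ℝ) (n : ℕ) : ℝ := qpInf (p * q ^ n) q - qpInf (q ^ n) q

/-- The maximal parameter sequence `M_k`. -/
noncomputable def Mseq (p q : ℝ) (k : ℕ) : ℝ :=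
  q * Δ p q k / ((1 + q - (1 + p) * q ^ (k + 1)) * Δ p q (k + 1))

open Filter Finset Real

lemma Finset.prod_Icc_mul_div_add_two {K : Type*} [Field K] {a : ℕ → K}
    (ha : ∀ k, a (k + 1) ≠ 0) (c : K) (n : ℕ) :
    ∏ k ∈ Icc 1 n, c * a k / a (k + 2) = c ^ n * (a 1 * a 2) / (a (n + 1) * a (n + 2)) := by
  induction n with
  | zero => simp [div_self (mul_ne_zero (ha 0) (ha 1))]
  | succ n ih =>
    rw [prod_Icc_succ_top (by omega), ih]
    have := ha n
    have := ha (n + 1)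
    have := ha (n + 2)
    field_simp
    ring

lemma tendsto_sum_Icc_atTop_of_le {f : ℕ → ℝ} {c : ℝ} (hc : 0 < c) (hf : ∀ n, 1 ≤ n → c ≤ f n) :
    Tendsto (fun N => ∑ n ∈ Icc 1 N, f n) atTop atTop := by
  refine tendsto_atTop_mono (fun N => ?_) (tendsto_natCast_atTop_atTop.atTop_mul_const hc)
  calc (N : ℝ) * c = ∑ n ∈ Icc 1 N, c := by simp
    _ ≤ ∑ n ∈ Icc 1 N, f n := sum_le_sum fun n hn => hf n (mem_Icc.1 hn).1

section QPochhammer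

variable {z z' q : ℝ}

lemma multipliable_one_sub_mul_pow (z : ℝ) (hq : |q| < 1) :
    Multipliable fun k : ℕ => 1 - z * q ^ k := by
  simpa [sub_eq_add_neg] using
    Real.multipliable_one_add_of_summable ((summable_geometric_of_abs_lt_one hq).mul_left (-z))

lemma qpInf_eq_one_sub_mul_qpInf (z : ℝ) (hq : |q| < 1) :
    qpInf z q = (1 - z) * qpInf (z * q) q := by
  have h : Multipliable fun k : ℕ => 1 - z * q ^ (k + 1) := by
    convert multipliable_one_sub_mul_pow (z * q) hq using 2 with k
    ring
  have := tprod_eq_zero_mul' (f := fun k : ℕ => 1 - z * q ^ k) h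
  rw [pow_zero, mul_one] at this
  rw [qpInf, this, qpInf]
  congr 1
  exact tprod_congr fun k => by ring

lemma qpInf_mul_pow_eq (z : ℝ) (hq : |q| < 1) (n : ℕ) :
    qpInf (z * q ^ n) q = (1 - z * q ^ n) * qpInf (z * q ^ (n + 1)) q := by
  rw [qpInf_eq_one_sub_mul_qpInf _ hq, pow_succ, mul_assoc]

lemma one_sub_mul_pow_pos (hq0 : 0 ≤ q) (hq1 : q < 1) (hz : z < 1) (k : ℕ) :
    0 < 1 - z * q ^ k := by
  have : z * q ^ k < 1 := by
    rcases le_or_gt 0 z with hz0 | hz0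
    · exact (mul_le_of_le_one_right hz0 (pow_le_one₀ hq0 hq1.le)).trans_lt hz
    · exact (mul_nonpos_of_nonpos_of_nonneg hz0.le (pow_nonneg hq0 k)).trans_lt one_pos
  linarith

lemma summable_log_one_sub_mul_pow (z : ℝ) (hq0 : 0 ≤ q) (hq1 : q < 1) :
    Summable fun k : ℕ => log (1 - z * q ^ k) := by
  simpa [sub_eq_add_neg] using
    Real.summable_log_one_add_of_summable ((summable_geometric_of_lt_one hq0 hq1).mul_left (-z))

lemma qpInf_eq_exp_tsum_log (hq0 : 0 ≤ q) (hq1 : q < 1) (hz : z < 1) :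
    qpInf z q = exp (∑' k : ℕ, log (1 - z * q ^ k)) :=
  (rexp_tsum_eq_tprod (one_sub_mul_pow_pos hq0 hq1 hz)
    (summable_log_one_sub_mul_pow z hq0 hq1)).symm

lemma qpInf_lt_qpInf (hq0 : 0 ≤ q) (hq1 : q < 1) (hzz' : z < z') (hz' : z' < 1) :
    qpInf z' q < qpInf z q := by
  have hz : z < 1 := hzz'.trans hz'
  rw [qpInf_eq_exp_tsum_log hq0 hq1 hz, qpInf_eq_exp_tsum_log hq0 hq1 hz', exp_lt_exp]
  refine Summable.tsum_lt_tsum (i := 0) (fun k => ?_) ?_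
    (summable_log_one_sub_mul_pow z' hq0 hq1) (summable_log_one_sub_mul_pow z hq0 hq1)
  · refine log_le_log (one_sub_mul_pow_pos hq0 hq1 hz' k) ?_
    have := mul_le_mul_of_nonneg_right hzz'.le (pow_nonneg hq0 k)
    linarith
  · refine log_lt_log (one_sub_mul_pow_pos hq0 hq1 hz' 0) ?_
    simpa using hzz'

lemma qpInf_le_one (hq0 : 0 ≤ q) (hq1 : q < 1) (hz0 : 0 ≤ z) (hz1 : z < 1) : qpInf z q ≤ 1 := by
  rw [qpInf_eq_exp_tsum_log hq0 hq1 hz1, exp_le_one_iff]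
  refine tsum_nonpos fun k => log_nonpos (one_sub_mul_pow_pos hq0 hq1 hz1 k).le ?_
  have := mul_nonneg hz0 (pow_nonneg hq0 k)
  linarith

lemma one_sub_qpInf_le (hq0 : 0 ≤ q) (hq1 : q < 1) (hz0 : 0 ≤ z) (hz1 : z < 1) :
    1 - qpInf z q ≤ z / ((1 - z) * (1 - q)) := by
  have hgeom : HasSum (fun k : ℕ => -(z / (1 - z)) * q ^ k) (-(z / (1 - z)) * (1 - q)⁻¹) :=
    (hasSum_geometric_of_lt_one hq0 hq1).mul_left _
  have h1z : 0 < 1 - z := by linarith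
  have hlog : -(z / (1 - z)) * (1 - q)⁻¹ ≤ ∑' k : ℕ, log (1 - z * q ^ k) := by
    refine hasSum_le (fun k => ?_) hgeom (summable_log_one_sub_mul_pow z hq0 hq1).hasSum
    have hx := one_sub_mul_pow_pos hq0 hq1 hz1 k
    have hle : z * q ^ k ≤ z := mul_le_of_le_one_right hz0 (pow_le_one₀ hq0 hq1.le)
    calc -(z / (1 - z)) * q ^ k = -(z * q ^ k / (1 - z)) := by ring
      _ ≤ -(z * q ^ k / (1 - z * q ^ k)) :=
        neg_le_neg (div_le_div_of_nonneg_left (by positivity) h1z (by linarith))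
      _ = 1 - (1 - z * q ^ k)⁻¹ := by field_simp; ring
      _ ≤ log (1 - z * q ^ k) := one_sub_inv_le_log_of_pos hx
  have := add_one_le_exp (∑' k : ℕ, log (1 - z * q ^ k))
  rw [qpInf_eq_exp_tsum_log hq0 hq1 hz1]
  have h1q : 0 < 1 - q := by linarith
  calc 1 - exp (∑' k : ℕ, log (1 - z * q ^ k)) ≤ -(∑' k : ℕ, log (1 - z * q ^ k)) := by linarith
    _ ≤ z / (1 - z) * (1 - q)⁻¹ := by linarith
    _ = z / ((1 - z) * (1 - q)) := by field_simp

end QPochhammer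

section Delta

variable {p q : ℝ}

lemma Δ_add_two (hq : |q| < 1) (k : ℕ) :
    (1 - q ^ (k + 1)) * (1 - p * q ^ (k + 1)) * Δ p q (k + 2)
      = (1 + q - (1 + p) * q ^ (k + 1)) * Δ p q (k + 1) - q * Δ p q k := by
  have hB : ∀ n, qpInf (q ^ n) q = (1 - q ^ n) * qpInf (q ^ (n + 1)) q := fun n => by
    simpa using qpInf_mul_pow_eq 1 hq n
  simp only [Δ, qpInf_mul_pow_eq p hq k, qpInf_mul_pow_eq p hq (k + 1), hB k, hB (k + 1)]
  ring

lemma Δ_pos (hp : p < 1) (hq0 : 0 < q) (hq1 : q < 1) {n : ℕ} (hn : n ≠ 0) : 0 < Δ p q n := by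
  have hqn : 0 < q ^ n := pow_pos hq0 n
  exact sub_pos.2 (qpInf_lt_qpInf hq0.le hq1 (mul_lt_of_lt_one_left hqn hp)
    (pow_lt_one₀ hq0.le hq1 hn))

lemma Δ_le (hp0 : 0 ≤ p) (hp1 : p < 1) (hq0 : 0 < q) (hq1 : q < 1) {n : ℕ} (hn : n ≠ 0) :
    Δ p q n ≤ q ^ n / (1 - q) ^ 2 := by
  have hqn : q ^ n ≤ q := pow_le_of_le_one hq0.le hq1.le hn
  have hqn1 : q ^ n < 1 := pow_lt_one₀ hq0.le hq1 hn
  have hA := qpInf_le_one hq0.le hq1 (mul_nonneg hp0 (pow_nonneg hq0.le n))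
    (mul_lt_of_lt_one_left (pow_pos hq0 n) hp1 |>.trans hqn1)
  have hB := one_sub_qpInf_le hq0.le hq1 (pow_nonneg hq0.le n) hqn1
  have h1q : 0 < 1 - q := by linarith
  calc Δ p q n ≤ 1 - qpInf (q ^ n) q := by rw [Δ]; linarith
    _ ≤ q ^ n / ((1 - q ^ n) * (1 - q)) := hB
    _ ≤ q ^ n / (1 - q) ^ 2 := by
      rw [sq]
      exact div_le_div_of_nonneg_left (pow_nonneg hq0.le n) (by positivity)
        (mul_le_mul_of_nonneg_right (by linarith) h1q.le)

lemma Mseq_div_one_sub_Mseq (hp : p < 1) (hq0 : 0 < q) (hq1 : q < 1) (k : ℕ) :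
    Mseq p q k / (1 - Mseq p q k)
      = q * Δ p q k / (Δ p q (k + 2) * (1 - q ^ (k + 1)) * (1 - p * q ^ (k + 1))) := by
  have hqk : q ^ (k + 1) ≤ q := pow_le_of_le_one hq0.le hq1.le k.succ_ne_zero
  have hD : 0 < 1 + q - (1 + p) * q ^ (k + 1) := by nlinarith [pow_pos hq0 (k + 1)]
  have hDΔ : (1 + q - (1 + p) * q ^ (k + 1)) * Δ p q (k + 1) ≠ 0 :=
    (mul_pos hD (Δ_pos hp hq0 hq1 k.succ_ne_zero)).ne'
  have h1M : 1 - Mseq p q k = (1 - q ^ (k + 1)) * (1 - p * q ^ (k + 1)) * Δ p q (k + 2)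
      / ((1 + q - (1 + p) * q ^ (k + 1)) * Δ p q (k + 1)) := by
    rw [Mseq, Δ_add_two (abs_lt.2 ⟨by linarith, hq1⟩), eq_div_iff hDΔ, sub_mul,
      div_mul_cancel₀ _ hDΔ, one_mul]
  rw [h1M, Mseq, div_div_div_cancel_right₀ hDΔ]
  ring

lemma Δ_succ_mul_Δ_add_two_le (hp0 : 0 ≤ p) (hp1 : p < 1) (hq0 : 0 < q) (hq1 : q < 1) (n : ℕ) :
    Δ p q (n + 1) * Δ p q (n + 2) ≤ q ^ n * (q ^ 3 / (1 - q) ^ 4) := by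
  have h1q : 0 < 1 - q := sub_pos.2 hq1
  have := Δ_pos hp1 hq0 hq1 (n := n + 2) (by omega)
  calc Δ p q (n + 1) * Δ p q (n + 2)
      ≤ q ^ (n + 1) / (1 - q) ^ 2 * (q ^ (n + 2) / (1 - q) ^ 2) := by
        gcongr
        · exact Δ_le hp0 hp1 hq0 hq1 n.succ_ne_zero
        · exact Δ_le hp0 hp1 hq0 hq1 (by omega)
    _ = q ^ n * q ^ n * (q ^ 3 / (1 - q) ^ 4) := by field_simp; ring
    _ ≤ q ^ n * 1 * (q ^ 3 / (1 - q) ^ 4) := by gcongr; exact pow_le_one₀ hq0.le hq1.le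
    _ = q ^ n * (q ^ 3 / (1 - q) ^ 4) := by rw [mul_one]

lemma div_Δ_add_two_le (hp0 : 0 ≤ p) (hp1 : p < 1) (hq0 : 0 < q) (hq1 : q < 1) {k : ℕ}
    (hk : k ≠ 0) :
    q * Δ p q k / Δ p q (k + 2)
      ≤ q * Δ p q k / (Δ p q (k + 2) * (1 - q ^ (k + 1)) * (1 - p * q ^ (k + 1))) := by
  have hqk : 0 < q ^ (k + 1) := pow_pos hq0 (k + 1)
  have hE1 : 0 < 1 - q ^ (k + 1) := sub_pos.2 (pow_lt_one₀ hq0.le hq1 k.succ_ne_zero)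
  have hE2 : 0 < 1 - p * q ^ (k + 1) := by nlinarith
  have hΔ := Δ_pos hp1 hq0 hq1 (n := k + 2) (by omega)
  refine div_le_div_of_nonneg_left (mul_nonneg hq0.le (Δ_pos hp1 hq0 hq1 hk).le)
    (by positivity) ?_
  calc Δ p q (k + 2) * (1 - q ^ (k + 1)) * (1 - p * q ^ (k + 1))
      ≤ Δ p q (k + 2) * 1 * 1 := by
        gcongr
        · linarith
        · nlinarith
    _ = Δ p q (k + 2) := by ring

lemma Δ_one_mul_Δ_two_div_le_prod (hp0 : 0 ≤ p) (hp1 : p < 1) (hq0 : 0 < q) (hq1 : q < 1)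
    (n : ℕ) :
    Δ p q 1 * Δ p q 2 / (q ^ 3 / (1 - q) ^ 4)
      ≤ ∏ k ∈ Icc 1 n,
          q * Δ p q k / (Δ p q (k + 2) * (1 - q ^ (k + 1)) * (1 - p * q ^ (k + 1))) := by
  have hΔ : ∀ {k : ℕ}, k ≠ 0 → 0 < Δ p q k := Δ_pos hp1 hq0 hq1
  have hX : 0 < Δ p q 1 * Δ p q 2 := mul_pos (hΔ one_ne_zero) (hΔ two_ne_zero)
  have hY : 0 < Δ p q (n + 1) * Δ p q (n + 2) := mul_pos (hΔ n.succ_ne_zero) (hΔ (by omega))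
  calc Δ p q 1 * Δ p q 2 / (q ^ 3 / (1 - q) ^ 4)
      = q ^ n * (Δ p q 1 * Δ p q 2) / (q ^ n * (q ^ 3 / (1 - q) ^ 4)) :=
        (mul_div_mul_left _ _ (pow_ne_zero n hq0.ne')).symm
    _ ≤ q ^ n * (Δ p q 1 * Δ p q 2) / (Δ p q (n + 1) * Δ p q (n + 2)) :=
        div_le_div_of_nonneg_left (by positivity) hY
          (Δ_succ_mul_Δ_add_two_le hp0 hp1 hq0 hq1 n)
    _ = ∏ k ∈ Icc 1 n, q * Δ p q k / Δ p q (k + 2) :=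
        (prod_Icc_mul_div_add_two (fun k => (hΔ k.succ_ne_zero).ne') q n).symm
    _ ≤ _ := by
      refine prod_le_prod (fun k hk => ?_) (fun k hk => ?_)
      · have := hΔ (Nat.one_le_iff_ne_zero.1 (mem_Icc.1 hk).1)
        have := hΔ (k := k + 2) (by omega)
        positivity
      · exact div_Δ_add_two_le hp0 hp1 hq0 hq1 (Nat.one_le_iff_ne_zero.1 (mem_Icc.1 hk).1)

end Delta

theorem stmt_18 (p q : ℝ) (hp0 : 0 ≤ p) (hp1 : p < 1) (hq0 : 0 < q) (hq1 : q < 1) :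
    (∀ k : ℕ, Mseq p q k / (1 - Mseq p q k)
        = q * Δ p q k / (Δ p q (k + 2) * (1 - q ^ (k + 1)) * (1 - p * q ^ (k + 1)))) ∧
    Filter.Tendsto
      (fun N : ℕ => ∑ n ∈ Finset.Icc 1 N,
        ∏ k ∈ Finset.Icc 1 n, (Mseq p q k / (1 - Mseq p q k)))
      Filter.atTop Filter.atTop := by
  have hM := Mseq_div_one_sub_Mseq hp1 hq0 hq1
  refine ⟨hM, ?_⟩
  simp only [hM]
  have hc : 0 < Δ p q 1 * Δ p q 2 / (q ^ 3 / (1 - q) ^ 4) := by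
    have := Δ_pos hp1 hq0 hq1 one_ne_zero
    have := Δ_pos hp1 hq0 hq1 two_ne_zero
    have := sub_pos.2 hq1
    positivity
  exact tendsto_sum_Icc_atTop_of_le hc fun n _ => Δ_one_mul_Δ_two_div_le_prod hp0 hp1 hq0 hq1 n
end
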